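/- If f: Dⁿ → ℝ is α-bisubmodular, then its Lovász extension equals its convex closure: f^L(x) = f⁻(x) for all x ∈ [-α,1]ⁿ. -/

import Mathlib

/-!
Among the distributions on `Dⁿ` with marginal `x` (a compact set), take one minimising the expected
value of `f` and, among those, the expected value of the potential
`φ c = (4n + 1)|supp c| - |supp c|²`. If its support contained two incomparable points `a, b`,
moving mass `ε` from each of them to `a ∧₀ b`, to `a ∨₀ b` (weight `α`) and to `a ∨₁ b`
(weight `1 - α`) would keep the marginal, not increase the cost (α-bisubmodularity) and strictly
decrease the potential; so this minimiser is chain-supported.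

A chain-supported distribution with marginal `x` is unique: no coordinate takes both values `1` and
`-α` on its support, so the mass of each fiber `{c | c i = d}`, `d ≠ 0`, is read off from `x i`; the
mass of the upper set of `a` is the least mass of a fiber through `a`; and the masses of all upper
sets determine a function on a finite poset. Hence `Λ x` is the minimiser and `f^L(x) = f⁻(x)`.
-/

open Finset

/-- The three-element domain `D = {-α, 0, 1}`, abstractly. -/
inductive D3 : Type
  | neg : D3
  | zero : D3
  | one : D3
deriving DecidableEq

instance : Fintype D3 :=
  ⟨{D3.neg, D3.zero, D3.one}, by rintro (_ | _ | _) <;> simp⟩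

namespace D3

/-- The embedding of `D3` into `ℝ` sending `neg ↦ -α`, `zero ↦ 0`, `one ↦ 1`. -/
def emb (α : ℝ) : D3 → ℝ
  | neg => -α
  | zero => 0
  | one => 1

/-- The partial order `0 ≺ 1`, `0 ≺ -α`, with `1` and `-α` incomparable. -/
instance : PartialOrder D3 where
  le x y := x = y ∨ x = zero
  le_refl x := Or.inl rfl
  le_trans x y z hxy hyz := by
    rcases hxy with rfl | rfl
    · exact hyz
    · exact Or.inr rfl
  le_antisymm x y hxy hyx := by
    rcases hxy with rfl | rfl
    · rfl
    · rcases hyx with rfl | rfl <;> rfl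

/-- `∧₀` : `1 ∧₀ (-α) = (-α) ∧₀ 1 = 0`, and min w.r.t. `≺` otherwise. -/
def meet0 (x y : D3) : D3 := if x = y then x else zero

/-- `∨₀` : `1 ∨₀ (-α) = (-α) ∨₀ 1 = 0`, and max w.r.t. `≺` otherwise. -/
def join0 (x y : D3) : D3 :=
  if x = y then x else if x = zero then y else if y = zero then x else zero

/-- `∨₁` : `1 ∨₁ (-α) = (-α) ∨₁ 1 = 1`, and max w.r.t. `≺` otherwise. -/
def join1 (x y : D3) : D3 :=
  if x = y then x else if x = zero then y else if y = zero then x else one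

end D3

/-- Componentwise `∧₀` on `Dⁿ`. -/
def vmeet0 {n : ℕ} (a b : Fin n → D3) : Fin n → D3 := fun i => D3.meet0 (a i) (b i)

/-- Componentwise `∨₀` on `Dⁿ`. -/
def vjoin0 {n : ℕ} (a b : Fin n → D3) : Fin n → D3 := fun i => D3.join0 (a i) (b i)

/-- Componentwise `∨₁` on `Dⁿ`. -/
def vjoin1 {n : ℕ} (a b : Fin n → D3) : Fin n → D3 := fun i => D3.join1 (a i) (b i)

/-- `lam` is a probability distribution on `Dⁿ`. -/
def IsDist (n : ℕ) (lam : (Fin n → D3) → ℝ) : Prop :=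
  (∀ a, 0 ≤ lam a ∧ lam a ≤ 1) ∧ ∑ a : Fin n → D3, lam a = 1

/-- `lam` has marginal vector `x`, i.e. `Σ_a lam(a)·a = x` in `ℝⁿ`. -/
def HasMarginal (α : ℝ) (n : ℕ) (lam : (Fin n → D3) → ℝ) (x : Fin n → ℝ) : Prop :=
  ∀ i, ∑ a : Fin n → D3, lam a * D3.emb α (a i) = x i

/-- The support of `lam` forms a chain w.r.t. the componentwise order on `Dⁿ`. -/
def ChainSupp (n : ℕ) (lam : (Fin n → D3) → ℝ) : Prop :=
  ∀ a b : Fin n → D3, lam a ≠ 0 → lam b ≠ 0 → a ≤ b ∨ b ≤ a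

/-- The box `[-α,1]ⁿ`. -/
def Box (α : ℝ) (n : ℕ) : Set (Fin n → ℝ) := {x | ∀ i, x i ∈ Set.Icc (-α) 1}

/-- `f : Dⁿ → ℝ` is α-bisubmodular. -/
def AlphaBisub (α : ℝ) (n : ℕ) (f : (Fin n → D3) → ℝ) : Prop :=
  ∀ a b : Fin n → D3,
    f (vmeet0 a b) + α * f (vjoin0 a b) + (1 - α) * f (vjoin1 a b) ≤ f a + f b

/-- Number of zero coordinates. -/
def zc {n : ℕ} (c : Fin n → D3) : ℕ := (Finset.univ.filter fun i => c i = D3.zero).card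

/-- The convex closure `f⁻(x)`. -/
noncomputable def cClos (α : ℝ) (n : ℕ) (f : (Fin n → D3) → ℝ) (x : Fin n → ℝ) : ℝ :=
  sInf {y | ∃ lam, IsDist n lam ∧ HasMarginal α n lam x ∧ y = ∑ a : Fin n → D3, lam a * f a}

namespace D3

lemma le_iff {x y : D3} : x ≤ y ↔ x = y ∨ x = zero := Iff.rfl

lemma eq_of_le_of_ne_zero {x y : D3} (h : x ≤ y) (hx : x ≠ zero) : x = y :=
  h.resolve_right hx

lemma indicator_split (u v : D3) :
    let P : ℕ := if u ≠ zero ∧ v = zero then 1 else 0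
    let Q : ℕ := if u = zero ∧ v ≠ zero then 1 else 0
    let R : ℕ := if u ≠ zero ∧ u = v then 1 else 0
    let T : ℕ := if u ≠ zero ∧ v ≠ zero ∧ u ≠ v then 1 else 0
    P + Q + R + T ≤ 1 ∧ (if meet0 u v ≠ zero then 1 else 0) = R ∧
      (if join0 u v ≠ zero then 1 else 0) = P + Q + R ∧
      (if join1 u v ≠ zero then 1 else 0) = P + Q + R + T ∧
      (if u ≠ zero then 1 else 0) = P + R + T ∧ (if v ≠ zero then 1 else 0) = Q + R + T := by
  cases u <;> cases v <;> decide

end D3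

theorem eq_of_forall_sum_filter_le_eq {β M : Type*} [Fintype β] [PartialOrder β] [DecidableLE β]
    [AddCommGroup M] {u v : β → M}
    (h : ∀ a, ∑ c ∈ univ.filter (a ≤ ·), u c = ∑ c ∈ univ.filter (a ≤ ·), v c) : u = v := by
  classical
  funext a
  induction a using WellFoundedGT.induction with
  | _ a ih =>
    have hsplit (w : β → M) :
        ∑ c ∈ univ.filter (a ≤ ·), w c = w a + ∑ c ∈ univ.filter (a < ·), w c := by
      rw [← add_sum_erase _ _ (mem_filter.2 ⟨mem_univ a, le_rfl⟩)]
      congr 1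
      refine sum_congr ?_ fun _ _ => rfl
      ext c
      simp [lt_iff_le_and_ne, and_comm, eq_comm]
    have hrest : ∑ c ∈ univ.filter (a < ·), u c = ∑ c ∈ univ.filter (a < ·), v c :=
      sum_congr rfl fun c hc => ih c (mem_filter.1 hc).2
    simpa [hsplit, hrest] using h a

theorem IsCompact.exists_isMinOn_lex {β γ : Type*} [TopologicalSpace β] [LinearOrder γ]
    [TopologicalSpace γ] [OrderClosedTopology γ] {K : Set β} (hK : IsCompact K) (hne : K.Nonempty)
    {L Φ : β → γ} (hL : Continuous L) (hΦ : Continuous Φ) :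
    ∃ y ∈ K, IsMinOn L K y ∧ IsMinOn Φ (K ∩ L ⁻¹' {L y}) y := by
  obtain ⟨y₀, hy₀, hmin₀⟩ := hK.exists_isMinOn hne hL.continuousOn
  obtain ⟨y, ⟨hy, hLy⟩, hmin⟩ := (hK.inter_right (isClosed_singleton.preimage hL)).exists_isMinOn
    ⟨y₀, hy₀, rfl⟩ hΦ.continuousOn
  rw [Set.mem_preimage, Set.mem_singleton_iff] at hLy
  exact ⟨y, hy, fun z hz => hLy ▸ hmin₀ hz, hLy ▸ hmin⟩

namespace Bisubmodular

open scoped Classical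

variable {n : ℕ}

lemma isDist_of_nonneg {lam : (Fin n → D3) → ℝ} (h0 : ∀ a, 0 ≤ lam a)
    (h1 : ∑ a, lam a = 1) : IsDist n lam :=
  ⟨fun a => ⟨h0 a, h1 ▸ single_le_sum (fun b _ => h0 b) (mem_univ a)⟩, h1⟩

def distSet (α : ℝ) (n : ℕ) (x : Fin n → ℝ) : Set ((Fin n → D3) → ℝ) :=
  {lam | IsDist n lam ∧ HasMarginal α n lam x}

lemma isCompact_distSet (α : ℝ) (x : Fin n → ℝ) : IsCompact (distSet α n x) := by
  have hclosed : IsClosed (distSet α n x) := by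
    have : distSet α n x = (⋂ a, {lam | 0 ≤ lam a} ∩ {lam | lam a ≤ 1}) ∩
        {lam | ∑ a, lam a = 1} ∩ ⋂ i, {lam | ∑ a, lam a * D3.emb α (a i) = x i} := by
      ext lam
      simp [distSet, IsDist, HasMarginal, forall_and]
    rw [this]
    refine ((isClosed_iInter fun a => (isClosed_le continuous_const (continuous_apply a)).inter
      (isClosed_le (continuous_apply a) continuous_const)).inter
      (isClosed_eq (by fun_prop) continuous_const)).inter
      (isClosed_iInter fun i => isClosed_eq (by fun_prop) continuous_const)
  exact (isCompact_univ_pi fun _ => isCompact_Icc).of_isClosed_subset hclosed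
    fun lam h => Set.mem_univ_pi.2 fun a => h.1.1 a

def bisubGap (α : ℝ) (g : (Fin n → D3) → ℝ) (a b : Fin n → D3) : ℝ :=
  g (vmeet0 a b) + α * g (vjoin0 a b) + (1 - α) * g (vjoin1 a b) - g a - g b

lemma bisubGap_const (α c : ℝ) (a b : Fin n → D3) : bisubGap α (fun _ => c) a b = 0 := by
  simp only [bisubGap]; ring

lemma bisubGap_emb (α : ℝ) (i : Fin n) (a b : Fin n → D3) :
    bisubGap α (fun c => D3.emb α (c i)) a b = 0 := by
  simp only [bisubGap, vmeet0, vjoin0, vjoin1]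
  cases a i <;> cases b i <;> simp [D3.meet0, D3.join0, D3.join1, D3.emb] <;> ring

noncomputable def uncrossDir (α : ℝ) (a b : Fin n → D3) : (Fin n → D3) → ℝ :=
  Pi.single (vmeet0 a b) 1 + α • Pi.single (vjoin0 a b) 1 + (1 - α) • Pi.single (vjoin1 a b) 1
    - Pi.single a 1 - Pi.single b 1

lemma add_smul_uncrossDir_dotProduct (lam g : (Fin n → D3) → ℝ) (ε α : ℝ) (a b : Fin n → D3) :
    (lam + ε • uncrossDir α a b) ⬝ᵥ g = lam ⬝ᵥ g + ε * bisubGap α g a b := by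
  simp [uncrossDir, bisubGap, add_dotProduct, sub_dotProduct, smul_dotProduct, single_dotProduct]

lemma add_smul_uncrossDir_mem_distSet {α ε : ℝ} (hα : α ∈ Set.Icc 0 1) {x : Fin n → ℝ}
    {lam : (Fin n → D3) → ℝ} (hlam : lam ∈ distSet α n x) {a b : Fin n → D3} (hab : a ≠ b)
    (hε : 0 ≤ ε) (hεa : ε ≤ lam a) (hεb : ε ≤ lam b) :
    lam + ε • uncrossDir α a b ∈ distSet α n x := by
  obtain ⟨⟨hbounds, hsum⟩, hm⟩ := hlam
  refine ⟨isDist_of_nonneg (fun c => ?_) ?_, fun i => ?_⟩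
  · have hgain : 0 ≤ (Pi.single (vmeet0 a b) 1 + α • Pi.single (vjoin0 a b) 1
        + (1 - α) • Pi.single (vjoin1 a b) 1 : (Fin n → D3) → ℝ) c := by
      have := hα.1
      have := sub_nonneg.2 hα.2
      simp only [Pi.add_apply, Pi.smul_apply, Pi.single_apply, smul_eq_mul]
      positivity
    have := (hbounds c).1
    simp only [uncrossDir, Pi.add_apply, Pi.sub_apply, Pi.smul_apply, smul_eq_mul] at hgain ⊢
    rcases eq_or_ne c a with rfl | hca
    · simp only [Pi.single_eq_same, Pi.single_eq_of_ne hab]; nlinarith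
    rcases eq_or_ne c b with rfl | hcb
    · simp only [Pi.single_eq_same, Pi.single_eq_of_ne hca]; nlinarith
    · simp only [Pi.single_eq_of_ne hca, Pi.single_eq_of_ne hcb]; nlinarith
  · have := add_smul_uncrossDir_dotProduct lam 1 ε α a b
    rw [dotProduct_one, dotProduct_one] at this
    rw [this, hsum, Pi.one_def, bisubGap_const, mul_zero, add_zero]
  · change (lam + ε • uncrossDir α a b) ⬝ᵥ _ = _
    rw [add_smul_uncrossDir_dotProduct, bisubGap_emb, mul_zero, add_zero]
    exact hm i

def supportSize (c : Fin n → D3) : ℕ := #{i | c i ≠ D3.zero}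

lemma exists_supportSize_decomp (a b : Fin n → D3) :
    ∃ p q r t : ℕ, p + q + r + t ≤ n ∧ (¬ a ≤ b → 1 ≤ p + t) ∧ (¬ b ≤ a → 1 ≤ q + t) ∧
      supportSize (vmeet0 a b) = r ∧ supportSize (vjoin0 a b) = p + q + r ∧
      supportSize (vjoin1 a b) = p + q + r + t ∧
      supportSize a = p + r + t ∧ supportSize b = q + r + t := by
  have h := fun i => D3.indicator_split (a i) (b i)
  refine ⟨#{i | a i ≠ .zero ∧ b i = .zero}, #{i | a i = .zero ∧ b i ≠ .zero},
    #{i | a i ≠ .zero ∧ a i = b i}, #{i | a i ≠ .zero ∧ b i ≠ .zero ∧ a i ≠ b i}, ?_, ?_, ?_, ?_⟩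
  · calc _ ≤ ∑ _ : Fin n, 1 := by
          simp only [card_filter, ← sum_add_distrib]
          exact sum_le_sum fun i _ => (h i).1
      _ = n := by simp
  · intro hab
    obtain ⟨i, hi⟩ : ∃ i, a i ≠ b i ∧ a i ≠ .zero := by
      simpa [Pi.le_def, D3.le_iff, not_or] using hab
    by_cases hb : b i = .zero
    · have : 0 < #{i | a i ≠ .zero ∧ b i = .zero} := card_pos.2 ⟨i, by simp [hi.2, hb]⟩
      omega
    · have : 0 < #{i | a i ≠ .zero ∧ b i ≠ .zero ∧ a i ≠ b i} :=
        card_pos.2 ⟨i, by simp [hi.1, hi.2, hb]⟩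
      omega
  · intro hba
    obtain ⟨i, hi⟩ : ∃ i, b i ≠ a i ∧ b i ≠ .zero := by
      simpa [Pi.le_def, D3.le_iff, not_or] using hba
    by_cases ha : a i = .zero
    · have : 0 < #{i | a i = .zero ∧ b i ≠ .zero} := card_pos.2 ⟨i, by simp [hi.2, ha]⟩
      omega
    · have : 0 < #{i | a i ≠ .zero ∧ b i ≠ .zero ∧ a i ≠ b i} :=
        card_pos.2 ⟨i, by simp [Ne.symm hi.1, hi.2, ha]⟩
      omega
  · simp only [supportSize, card_filter, ← sum_add_distrib]
    exact ⟨sum_congr rfl fun i _ => (h i).2.1, sum_congr rfl fun i _ => (h i).2.2.1,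
      sum_congr rfl fun i _ => (h i).2.2.2.1, sum_congr rfl fun i _ => (h i).2.2.2.2.1,
      sum_congr rfl fun i _ => (h i).2.2.2.2.2⟩

/- With `p, q, r, t` as in `exists_supportSize_decomp`, the gap of `potential` is
`-(4n+1)(1+α)t - 2pq - (1-α)(2(p+q+r)t + t²) + 2t(p+q+2r+t)`: for `t ≥ 1` the first term wins
since `p+q+2r+t ≤ 2n`, and for `t = 0` incomparability forces `p, q ≥ 1`. -/
noncomputable def potential (c : Fin n → D3) : ℝ :=
  (4 * n + 1) * supportSize c - (supportSize c : ℝ) ^ 2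

lemma bisubGap_potential_neg {α : ℝ} (hα : α ∈ Set.Ioc 0 1) {a b : Fin n → D3}
    (hab : ¬ a ≤ b) (hba : ¬ b ≤ a) : bisubGap α potential a b < 0 := by
  obtain ⟨hα0, hα1⟩ := hα
  obtain ⟨p, q, r, t, hn, hp, hq, hm, hj0, hj1, ha, hb⟩ := exists_supportSize_decomp a b
  have hn' : (p + q + r + t : ℝ) ≤ n := by exact_mod_cast hn
  simp only [bisubGap, potential, hm, hj0, hj1, ha, hb]
  push_cast
  rcases Nat.eq_zero_or_pos t with rfl | ht
  · have hp' : (1 : ℝ) ≤ p := by exact_mod_cast hp hab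
    have hq' : (1 : ℝ) ≤ q := by exact_mod_cast hq hba
    push_cast
    nlinarith
  · have ht' : (1 : ℝ) ≤ t := by exact_mod_cast ht
    have hS : (0 : ℝ) ≤ 2 * (p + q + r) * t + t ^ 2 := by positivity
    have hK : (0 : ℝ) ≤ (4 * n + 1) * t := by positivity
    have hbound : (p + q + 2 * r + t : ℝ) ≤ 2 * n := by linarith
    nlinarith [mul_nonneg (sub_nonneg.2 hα1) hS, mul_nonneg hα0.le hK,
      mul_nonneg (p.cast_nonneg : (0 : ℝ) ≤ p) (q.cast_nonneg : (0 : ℝ) ≤ q),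
      mul_le_mul_of_nonneg_left hbound (t.cast_nonneg : (0 : ℝ) ≤ t)]

lemma exists_chainSupp_isMinOn {α : ℝ} (hα : α ∈ Set.Ioc 0 1) {f : (Fin n → D3) → ℝ}
    (hf : AlphaBisub α n f) {x : Fin n → ℝ} (hne : (distSet α n x).Nonempty) :
    ∃ lam ∈ distSet α n x, ChainSupp n lam ∧ IsMinOn (· ⬝ᵥ f) (distSet α n x) lam := by
  obtain ⟨lam, hlam, hminf, hminΦ⟩ := (isCompact_distSet α x).exists_isMinOn_lex hne
    (L := (· ⬝ᵥ f)) (Φ := (· ⬝ᵥ potential)) (by fun_prop) (by fun_prop)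
  refine ⟨lam, hlam, fun a b ha hb => ?_, hminf⟩
  by_contra! hcross
  set ε := min (lam a) (lam b)
  have hε : 0 < ε := lt_min ((hlam.1.1 a).1.lt_of_ne' ha) ((hlam.1.1 b).1.lt_of_ne' hb)
  have hab : a ≠ b := fun h => hcross.1 h.le
  have hlam' := add_smul_uncrossDir_mem_distSet (Set.Ioc_subset_Icc_self hα) hlam hab hε.le
    (min_le_left _ _) (min_le_right _ _)
  have hf_gap : bisubGap α f a b ≤ 0 := by have := hf a b; simp only [bisubGap]; linarith
  have hf_eq : (lam + ε • uncrossDir α a b) ⬝ᵥ f = lam ⬝ᵥ f :=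
    le_antisymm (by rw [add_smul_uncrossDir_dotProduct]; nlinarith) (hminf hlam')
  have hΦ : lam ⬝ᵥ potential ≤ (lam + ε • uncrossDir α a b) ⬝ᵥ potential :=
    hminΦ ⟨hlam', hf_eq⟩
  rw [add_smul_uncrossDir_dotProduct] at hΦ
  nlinarith [bisubGap_potential_neg hα hcross.1 hcross.2]

def fiberMass (lam : (Fin n → D3) → ℝ) (i : Fin n) (d : D3) : ℝ :=
  ∑ c ∈ univ.filter (fun c => c i = d), lam c

noncomputable def upperMass (lam : (Fin n → D3) → ℝ) (a : Fin n → D3) : ℝ :=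
  ∑ c ∈ univ.filter (a ≤ ·), lam c

lemma sum_mul_emb_eq_fiberMass (α : ℝ) (lam : (Fin n → D3) → ℝ) (i : Fin n) :
    ∑ c, lam c * D3.emb α (c i) = fiberMass lam i .one - α * fiberMass lam i .neg := by
  simp only [fiberMass, sum_filter, mul_sum, ← sum_sub_distrib]
  refine sum_congr rfl fun c _ => ?_
  cases c i <;> simp [D3.emb, mul_comm]

lemma fiberMass_one_eq_zero_or_fiberMass_neg_eq_zero {lam : (Fin n → D3) → ℝ}
    (hc : ChainSupp n lam) (i : Fin n) : fiberMass lam i .one = 0 ∨ fiberMass lam i .neg = 0 := by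
  by_contra! h
  obtain ⟨c, hc1, hlc⟩ := exists_ne_zero_of_sum_ne_zero h.1
  obtain ⟨c', hc'1, hlc'⟩ := exists_ne_zero_of_sum_ne_zero h.2
  rw [mem_filter] at hc1 hc'1
  rcases hc c c' hlc hlc' with hle | hle <;> have := hle i <;> simp_all [D3.le_iff]

lemma fiberMass_of_chainSupp {α : ℝ} (hα : 0 ≤ α) {lam : (Fin n → D3) → ℝ} {x : Fin n → ℝ}
    (h0 : ∀ c, 0 ≤ lam c) (hm : HasMarginal α n lam x) (hc : ChainSupp n lam) (i : Fin n) :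
    fiberMass lam i .one = max (x i) 0 ∧ α * fiberMass lam i .neg = max (-x i) 0 := by
  have hx := hm i
  rw [sum_mul_emb_eq_fiberMass] at hx
  have h1 : 0 ≤ fiberMass lam i .one := sum_nonneg fun c _ => h0 c
  have h2 : 0 ≤ α * fiberMass lam i .neg := mul_nonneg hα (sum_nonneg fun c _ => h0 c)
  rcases fiberMass_one_eq_zero_or_fiberMass_neg_eq_zero hc i with h | h
  · have hxi : x i = -(α * fiberMass lam i .neg) := by rw [← hx, h]; ring
    rw [h, max_eq_right (by linarith), max_eq_left (by linarith), hxi, neg_neg]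
    exact ⟨rfl, rfl⟩
  · have hxi : x i = fiberMass lam i .one := by rw [← hx, h]; ring
    rw [h, mul_zero, max_eq_left (by linarith), max_eq_right (by linarith), hxi]
    exact ⟨rfl, rfl⟩

lemma fiberMass_eq_of_chainSupp {α : ℝ} (hα : 0 < α) {lam mu : (Fin n → D3) → ℝ}
    {x : Fin n → ℝ} (hlam0 : ∀ c, 0 ≤ lam c) (hlam : HasMarginal α n lam x)
    (hlamc : ChainSupp n lam) (hmu0 : ∀ c, 0 ≤ mu c) (hmu : HasMarginal α n mu x)
    (hmuc : ChainSupp n mu) (i : Fin n) {d : D3} (hd : d ≠ .zero) :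
    fiberMass lam i d = fiberMass mu i d := by
  have hl := fiberMass_of_chainSupp hα.le hlam0 hlam hlamc i
  have hm := fiberMass_of_chainSupp hα.le hmu0 hmu hmuc i
  cases d
  · exact mul_left_cancel₀ hα.ne' (hl.2.trans hm.2.symm)
  · exact absurd rfl hd
  · exact hl.1.trans hm.1.symm

lemma filter_le_subset_filter_eq {a : Fin n → D3} {i : Fin n} (hi : a i ≠ .zero) :
    univ.filter (a ≤ ·) ⊆ univ.filter (fun c => c i = a i) := fun c hc => by
  rw [mem_filter] at hc ⊢
  exact ⟨hc.1, (D3.eq_of_le_of_ne_zero (hc.2 i) hi).symm⟩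

lemma upperMass_le_fiberMass {lam : (Fin n → D3) → ℝ} (h0 : ∀ c, 0 ≤ lam c) {a : Fin n → D3}
    {i : Fin n} (hi : a i ≠ .zero) : upperMass lam a ≤ fiberMass lam i (a i) :=
  sum_le_sum_of_subset_of_nonneg (filter_le_subset_filter_eq hi) fun c _ _ => h0 c

/- If the mass of every fiber `{c | c i = a i}` exceeded that of the upper set of `a`, each fiber
would carry a support point `cᵢ` outside the upper set; the largest `cᵢ` of the chain lies in
every fiber, hence above `a`. -/
lemma exists_upperMass_eq_fiberMass {lam : (Fin n → D3) → ℝ} (hc : ChainSupp n lam)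
    {a : Fin n → D3} (ha : ∃ i, a i ≠ .zero) :
    ∃ i, a i ≠ .zero ∧ upperMass lam a = fiberMass lam i (a i) := by
  by_contra! hlt
  have hwit : ∀ i, a i ≠ .zero → ∃ c, lam c ≠ 0 ∧ c i = a i ∧ ¬ a ≤ c := by
    intro i hi
    have hsplit := sum_sdiff (f := lam) (filter_le_subset_filter_eq hi)
    obtain ⟨c, hcmem, hlc⟩ := exists_ne_zero_of_sum_ne_zero fun h => hlt i hi <| by
      rw [fiberMass, ← hsplit, h, zero_add, upperMass]
    simp only [mem_sdiff, mem_filter, mem_univ, true_and] at hcmem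
    exact ⟨c, hlc, hcmem⟩
  obtain ⟨i₀, hi₀⟩ := ha
  obtain ⟨c₀, hc₀⟩ := hwit i₀ hi₀
  obtain ⟨m, hm, hmax⟩ := (univ.filter fun c => lam c ≠ 0 ∧
    ∃ i, a i ≠ .zero ∧ c i = a i ∧ ¬ a ≤ c).exists_maximal ⟨c₀, by simpa using ⟨hc₀.1, i₀, hi₀, hc₀.2⟩⟩
  simp only [mem_filter, mem_univ, true_and] at hm
  obtain ⟨hlm, -, -, -, ham⟩ := hm
  obtain ⟨j, hj⟩ : ∃ j, ¬ a j ≤ m j := by simpa [Pi.le_def] using ham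
  rw [D3.le_iff, not_or] at hj
  obtain ⟨c, hlc, hcj, hac⟩ := hwit j hj.2
  have hcm : c ≤ m := (hc c m hlc hlm).elim id
    (hmax (by simpa using ⟨hlc, j, hj.2, hcj, hac⟩))
  exact hj.1 (hcj ▸ D3.eq_of_le_of_ne_zero (hcm j) (hcj ▸ hj.2))

lemma upperMass_eq_of_chainSupp {α : ℝ} (hα : 0 < α) {x : Fin n → ℝ}
    {lam mu : (Fin n → D3) → ℝ} (hlam : lam ∈ distSet α n x) (hlamc : ChainSupp n lam)
    (hmu : mu ∈ distSet α n x) (hmuc : ChainSupp n mu) (a : Fin n → D3) :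
    upperMass lam a = upperMass mu a := by
  by_cases ha : ∃ i, a i ≠ .zero
  · have hfib {i : Fin n} (hi : a i ≠ .zero) := fiberMass_eq_of_chainSupp hα
      (fun c => (hlam.1.1 c).1) hlam.2 hlamc (fun c => (hmu.1.1 c).1) hmu.2 hmuc i hi
    obtain ⟨i, hi, hlam_eq⟩ := exists_upperMass_eq_fiberMass hlamc ha
    obtain ⟨j, hj, hmu_eq⟩ := exists_upperMass_eq_fiberMass hmuc ha
    refine le_antisymm ?_ ?_
    · rw [hmu_eq, ← hfib hj]
      exact upperMass_le_fiberMass (fun c => (hlam.1.1 c).1) hj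
    · rw [hlam_eq, hfib hi]
      exact upperMass_le_fiberMass (fun c => (hmu.1.1 c).1) hi
  · simp only [not_exists, not_not] at ha
    have hall : univ.filter (a ≤ ·) = univ := filter_true_of_mem fun c _ i => Or.inr (ha i)
    rw [upperMass, upperMass, hall, hlam.1.2, hmu.1.2]

lemma eq_of_chainSupp {α : ℝ} (hα : 0 < α) {x : Fin n → ℝ} {lam mu : (Fin n → D3) → ℝ}
    (hlam : lam ∈ distSet α n x) (hlamc : ChainSupp n lam) (hmu : mu ∈ distSet α n x)
    (hmuc : ChainSupp n mu) : lam = mu :=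
  eq_of_forall_sum_filter_le_eq (upperMass_eq_of_chainSupp hα hlam hlamc hmu hmuc)

lemma cClos_eq_of_isMinOn {α : ℝ} {f : (Fin n → D3) → ℝ} {x : Fin n → ℝ}
    {lam : (Fin n → D3) → ℝ} (hlam : lam ∈ distSet α n x)
    (hmin : IsMinOn (· ⬝ᵥ f) (distSet α n x) lam) : cClos α n f x = lam ⬝ᵥ f :=
  IsLeast.csInf_eq ⟨⟨lam, hlam.1, hlam.2, rfl⟩, by rintro _ ⟨mu, hd, hm, rfl⟩; exact hmin ⟨hd, hm⟩⟩

end Bisubmodular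

/-- if `f` is α-bisubmodular then `f^L = f⁻` on `[-α,1]ⁿ`. -/
theorem stmt10 (α : ℝ) (hα : α ∈ Set.Ioc (0 : ℝ) 1) (n : ℕ) (f : (Fin n → D3) → ℝ)
    (hf : AlphaBisub α n f)
    (Λ : (Fin n → ℝ) → (Fin n → D3) → ℝ)
    (hΛ : ∀ x ∈ Box α n, IsDist n (Λ x) ∧ HasMarginal α n (Λ x) x ∧ ChainSupp n (Λ x))
    (x : Fin n → ℝ) (hx : x ∈ Box α n) :
    ∑ a : Fin n → D3, Λ x a * f a = cClos α n f x := by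
  obtain ⟨hdist, hmarg, hchain⟩ := hΛ x hx
  have hΛx : Λ x ∈ Bisubmodular.distSet α n x := ⟨hdist, hmarg⟩
  obtain ⟨lam, hlam, hlamc, hmin⟩ := Bisubmodular.exists_chainSupp_isMinOn hα hf ⟨_, hΛx⟩
  rw [Bisubmodular.cClos_eq_of_isMinOn hlam hmin, Bisubmodular.eq_of_chainSupp hα.1 hΛx hchain hlam hlamc]
  rfl
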